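/- Let G be a finite group, g ∈ G, u, v units of ℤ⟨g⟩, and 𝒩 a subnormal series from ⟨g⟩ to G. Then the central unit construction satisfies c_𝒩(uv) = c_𝒩(u)·c_𝒩(v). -/

import Mathlib

/-- Conjugation `a^h = h⁻¹ a h` of group-ring elements by group elements. -/
noncomputable def conjBy {G : Type*} [Group G] (h : G) (a : MonoidAlgebra ℤ G) :
    MonoidAlgebra ℤ G :=
  MonoidAlgebra.of ℤ G h⁻¹ * a * MonoidAlgebra.of ℤ G h

/-- A subnormal series `⟨g⟩ = N₀ ⊴ N₁ ⊴ ⋯ ⊴ N_len = G`. -/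
structure SubnormalSeries (G : Type*) [Group G] (g : G) where
  len : ℕ
  N : ℕ → Subgroup G
  bot_eq : N 0 = Subgroup.zpowers g
  top_eq : N len = ⊤
  le_succ : ∀ i, N i ≤ N (i + 1)
  conj_mem : ∀ i, ∀ x ∈ N (i + 1), ∀ y ∈ N i, x⁻¹ * y * x ∈ N i

/-- A choice, for each `i`, of a (right) transversal `T i` of `N i` in `N (i+1)`,
recorded as a duplicate-free list. -/
structure TransversalSystem {G : Type*} [Group G] {g : G}
    (S : SubnormalSeries G g) where
  T : ℕ → List G
  nodup : ∀ i, (T i).Nodup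
  mem : ∀ i, ∀ t ∈ T i, t ∈ S.N (i + 1)
  rep : ∀ i, ∀ y ∈ S.N (i + 1), ∃! t, t ∈ T i ∧ y * t⁻¹ ∈ S.N i

/-- The construction `c⁰(u) = u`, `cⁱ(u) = ∏_{h ∈ T i} (cⁱ⁻¹(u))^h`. -/
noncomputable def cSeq {G : Type*} [Group G] {g : G} (S : SubnormalSeries G g)
    (TS : TransversalSystem S) (u : MonoidAlgebra ℤ G) : ℕ → MonoidAlgebra ℤ G
  | 0 => u
  | i + 1 => ((TS.T i).map fun h => conjBy h (cSeq S TS u i)).prod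

/-!
By induction on `i`, `cⁱ(u)` is supported on `Nᵢ` and fixed by conjugation by `Nᵢ`: conjugating
by `y ∈ Nᵢ₊₁` permutes the factors `(cⁱ(u))^t`, `t ∈ Tᵢ`, up to elements of `Nᵢ`, which fix `cⁱ(u)`.
Hence for `t, t' ∈ Nᵢ₊₁` the conjugates `cⁱ(u)^t` and `cⁱ(v)^t'` commute, since `cⁱ(v)^t'` is the
`t`-conjugate of an element supported on the normal subgroup `Nᵢ`, which `cⁱ(u)` centralizes.
So `cⁱ⁺¹(uv) = ∏ₜ cⁱ(u)^t cⁱ(v)^t` splits as `cⁱ⁺¹(u) cⁱ⁺¹(v)`.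
-/

open MonoidAlgebra

theorem List.prod_map_mul_of_commute {ι M : Type*} [Monoid M] {l : List ι} {f g : ι → M}
    (h : ∀ x ∈ l, ∀ y ∈ l, Commute (f x) (g y)) :
    (l.map fun i => f i * g i).prod = (l.map f).prod * (l.map g).prod := by
  induction l with
  | nil => simp
  | cons a l ih =>
    have hga : Commute (g a) (l.map f).prod :=
      Commute.list_prod_right _ _ fun x hx => by
        obtain ⟨b, hb, rfl⟩ := List.mem_map.mp hx
        exact (h b (List.mem_cons_of_mem a hb) a List.mem_cons_self).symm
    simp only [List.map_cons, List.prod_cons]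
    rw [ih fun x hx y hy => h x (List.mem_cons_of_mem a hx) y (List.mem_cons_of_mem a hy),
      hga.mul_mul_mul_comm]

section Transversal

variable {G : Type*} [Group G] {K L : Subgroup G} {T : List G}

theorem exists_perm_map_of_mul_right (hnodup : T.Nodup) (hmem : ∀ t ∈ T, t ∈ L)
    (hrep : ∀ x ∈ L, ∃! t, t ∈ T ∧ x * t⁻¹ ∈ K) {y : G} (hy : y ∈ L) :
    ∃ σ : G → G, (T.map σ).Perm T ∧ ∀ t ∈ T, t * y * (σ t)⁻¹ ∈ K := by
  have hσ : ∀ t ∈ T, ∃ s, s ∈ T ∧ t * y * s⁻¹ ∈ K := fun t ht =>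
    (hrep _ (L.mul_mem (hmem t ht) hy)).exists
  choose! σ hσT hσK using hσ
  have hinj : ∀ t ∈ T, ∀ t' ∈ T, σ t = σ t' → t = t' := by
    intro t ht t' ht' he
    have htt' : t * t'⁻¹ ∈ K := by
      have := K.mul_mem (hσK t ht) (K.inv_mem (hσK t' ht'))
      rwa [he, show t * y * (σ t')⁻¹ * (t' * y * (σ t')⁻¹)⁻¹ = t * t'⁻¹ by group] at this
    exact (hrep t (hmem t ht)).unique ⟨ht, by simp⟩ ⟨ht', htt'⟩
  have hsurj : ∀ s ∈ T, ∃ t ∈ T, σ t = s := by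
    intro s hs
    obtain ⟨t, ⟨ht, hst⟩, -⟩ := hrep (s * y⁻¹) (L.mul_mem (hmem s hs) (L.inv_mem hy))
    have hts : t * y * s⁻¹ ∈ K := by
      simpa [mul_assoc] using K.inv_mem hst
    exact ⟨t, ht, (hrep _ (L.mul_mem (hmem t ht) hy)).unique ⟨hσT t ht, hσK t ht⟩ ⟨hs, hts⟩⟩
  refine ⟨σ, (List.perm_ext_iff_of_nodup (hnodup.map_on hinj) hnodup).mpr fun s => ?_, hσK⟩
  simp only [List.mem_map]
  exact ⟨fun ⟨t, ht, hts⟩ => hts ▸ hσT t ht, hsurj s⟩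

end Transversal

section ConjBy

variable {G : Type*} [Group G]

theorem conjBy_eq_mapDomainRingHom (h : G) :
    conjBy h = mapDomainRingHom ℤ (MulAut.conj h⁻¹).toMonoidHom := by
  funext a
  induction a using MonoidAlgebra.induction_linear with
  | zero => simp [conjBy]
  | add a b ha hb => simp only [conjBy, mul_add, add_mul] at *; rw [ha, hb, map_add]
  | single x r => simp [conjBy, of_apply, single_mul_single]

theorem conjBy_mul (h : G) (a b : MonoidAlgebra ℤ G) :
    conjBy h (a * b) = conjBy h a * conjBy h b := by
  rw [conjBy_eq_mapDomainRingHom, map_mul]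

theorem conjBy_list_prod (h : G) (l : List (MonoidAlgebra ℤ G)) :
    conjBy h l.prod = (l.map (conjBy h)).prod := by
  rw [conjBy_eq_mapDomainRingHom, map_list_prod]

theorem conjBy_conjBy (h h' : G) (a : MonoidAlgebra ℤ G) :
    conjBy h' (conjBy h a) = conjBy (h * h') a := by
  simp only [conjBy, mul_inv_rev, map_mul, mul_assoc]

theorem conjBy_eq_self_iff_commute {y : G} {a : MonoidAlgebra ℤ G} :
    conjBy y a = a ↔ Commute (of ℤ G y) a := by
  have hy : of ℤ G y * of ℤ G y⁻¹ = 1 := by rw [← map_mul, mul_inv_cancel, map_one]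
  have hy' : of ℤ G y⁻¹ * of ℤ G y = 1 := by rw [← map_mul, inv_mul_cancel, map_one]
  constructor
  · intro h
    calc of ℤ G y * a = of ℤ G y * conjBy y a := by rw [h]
      _ = a * of ℤ G y := by rw [conjBy, ← mul_assoc, ← mul_assoc, hy, one_mul]
  · intro h
    rw [conjBy, mul_assoc, ← h.eq, ← mul_assoc, hy', one_mul]

end ConjBy

section Supported

variable {G : Type*} [Group G]

def supportedIn (H : Subgroup G) : Submonoid (MonoidAlgebra ℤ G) where
  carrier := {a | (a.coeff.support : Set G) ⊆ H}
  mul_mem' {a b} ha hb x hx := by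
    classical
    obtain ⟨y, hy, z, hz, rfl⟩ := Finset.mem_mul.mp (support_coeff_mul_subset a b hx)
    exact H.mul_mem (ha hy) (hb hz)
  one_mem' x hx := Finset.mem_one.mp (support_coeff_one_subset (Finset.mem_coe.mp hx)) ▸ H.one_mem

theorem mem_supportedIn {H : Subgroup G} {a : MonoidAlgebra ℤ G} :
    a ∈ supportedIn H ↔ (a.coeff.support : Set G) ⊆ H :=
  Iff.rfl

theorem supportedIn_mono {H H' : Subgroup G} (hle : H ≤ H') : supportedIn H ≤ supportedIn H' :=
  fun _ ha => (mem_supportedIn.mp ha).trans hle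

theorem conjBy_mem_supportedIn {H : Subgroup G} {h : G} (hh : ∀ y ∈ H, h⁻¹ * y * h ∈ H)
    {a : MonoidAlgebra ℤ G} (ha : a ∈ supportedIn H) : conjBy h a ∈ supportedIn H := by
  classical
  intro x hx
  rw [conjBy_eq_mapDomainRingHom, mapDomainRingHom_apply, Finset.mem_coe, coeff_mapDomain] at hx
  obtain ⟨z, hz, rfl⟩ := Finset.mem_image.mp (Finsupp.mapDomain_support hx)
  simpa using hh z (ha hz)

theorem commute_of_mem_supportedIn {H : Subgroup G} {a b : MonoidAlgebra ℤ G}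
    (ha : ∀ y ∈ H, Commute (of ℤ G y) a) (hb : b ∈ supportedIn H) : Commute a b := by
  have hspan : b ∈ Submodule.span ℤ (of ℤ G '' H) :=
    Submodule.span_mono (Set.image_mono hb) (mem_span_support_coeff b)
  clear hb
  induction hspan using Submodule.span_induction with
  | mem x hx =>
    obtain ⟨y, hy, rfl⟩ := hx
    exact (ha y hy).symm
  | zero => exact Commute.zero_right a
  | add x y _ _ hx hy => exact hx.add_right hy
  | smul r x _ hx => exact hx.smul_right r

theorem commute_conjBy_conjBy {H K : Subgroup G} (hK : ∀ x ∈ K, ∀ y ∈ H, x⁻¹ * y * x ∈ H)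
    {a b : MonoidAlgebra ℤ G} (ha : ∀ y ∈ H, conjBy y a = a) (hb : b ∈ supportedIn H)
    {h h' : G} (hh : h ∈ K) (hh' : h' ∈ K) : Commute (conjBy h a) (conjBy h' b) := by
  have hb' : conjBy (h' * h⁻¹) b ∈ supportedIn H :=
    conjBy_mem_supportedIn (hK _ (K.mul_mem hh' (K.inv_mem hh))) hb
  have hab' : Commute a (conjBy (h' * h⁻¹) b) :=
    commute_of_mem_supportedIn (fun y hy => conjBy_eq_self_iff_commute.mp (ha y hy)) hb'
  have hconj : conjBy h' b = conjBy h (conjBy (h' * h⁻¹) b) := by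
    rw [conjBy_conjBy, inv_mul_cancel_right]
  rw [hconj, Commute, SemiconjBy, ← conjBy_mul, ← conjBy_mul, hab'.eq]

end Supported

section CentralUnit

variable {G : Type*} [Group G] {g : G} (S : SubnormalSeries G g) (TS : TransversalSystem S)
  {u : MonoidAlgebra ℤ G}

theorem cSeq_mem_supportedIn (hu : u ∈ supportedIn (S.N 0)) (i : ℕ) :
    cSeq S TS u i ∈ supportedIn (S.N i) := by
  induction i with
  | zero => exact hu
  | succ i ih =>
    refine Submonoid.list_prod_mem _ fun b hb => ?_
    obtain ⟨t, ht, rfl⟩ := List.mem_map.mp hb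
    have htN := TS.mem i t ht
    exact conjBy_mem_supportedIn (fun y hy => mul_mem (mul_mem (inv_mem htN) hy) htN)
      (supportedIn_mono (S.le_succ i) ih)

theorem conjBy_cSeq (hu : u ∈ supportedIn (S.N 0)) (i : ℕ) :
    ∀ y ∈ S.N i, conjBy y (cSeq S TS u i) = cSeq S TS u i := by
  induction i with
  | zero =>
    intro y hy
    rw [S.bot_eq] at hu hy
    refine conjBy_eq_self_iff_commute.mpr (commute_of_mem_supportedIn (fun z hz => ?_) hu)
    obtain ⟨m, rfl⟩ := Subgroup.mem_zpowers_iff.mp hy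
    obtain ⟨n, rfl⟩ := Subgroup.mem_zpowers_iff.mp hz
    exact ((Commute.refl g).zpow_zpow n m).map (of ℤ G)
  | succ i ih =>
    intro y hy
    set a := cSeq S TS u i
    obtain ⟨σ, hperm, hσ⟩ :=
      exists_perm_map_of_mul_right (TS.nodup i) (TS.mem i) (TS.rep i) hy
    -- `t * y` and its representative `σ t` differ by an element of `N i`, which fixes `a`.
    have hfactor : ∀ t ∈ TS.T i, conjBy y (conjBy t a) = conjBy (σ t) a := fun t ht => by
      rw [conjBy_conjBy, ← inv_mul_cancel_right (t * y) (σ t), ← conjBy_conjBy, ih _ (hσ t ht)]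
    have hcomm : ((TS.T i).map fun t => conjBy t a).Pairwise Commute :=
      List.pairwise_of_forall_mem_list fun _ hb _ hc => by
        obtain ⟨t, ht, rfl⟩ := List.mem_map.mp hb
        obtain ⟨t', ht', rfl⟩ := List.mem_map.mp hc
        exact commute_conjBy_conjBy (S.conj_mem i) ih (cSeq_mem_supportedIn S TS hu i)
          (TS.mem i t ht) (TS.mem i t' ht')
    calc conjBy y (cSeq S TS u (i + 1))
        = ((TS.T i).map fun t => conjBy y (conjBy t a)).prod := by
          rw [cSeq, conjBy_list_prod, List.map_map]; rfl
      _ = (((TS.T i).map σ).map fun t => conjBy t a).prod := by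
          rw [List.map_map, List.map_congr_left hfactor]; rfl
      _ = cSeq S TS u (i + 1) :=
          (hperm.map _).prod_eq' (((hperm.map _).pairwise_iff Commute.symm).mpr hcomm)

end CentralUnit

theorem cSeq_mul_general {G : Type*} [Group G] (g : G)
    (S : SubnormalSeries G g) (TS : TransversalSystem S)
    (u v : MonoidAlgebra ℤ G)
    (husupp : (u.coeff.support : Set G) ⊆ (Subgroup.zpowers g : Subgroup G))
    (hvsupp : (v.coeff.support : Set G) ⊆ (Subgroup.zpowers g : Subgroup G)) :
    cSeq S TS (u * v) S.len = cSeq S TS u S.len * cSeq S TS v S.len := by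
  have hu : u ∈ supportedIn (S.N 0) := S.bot_eq ▸ husupp
  have hv : v ∈ supportedIn (S.N 0) := S.bot_eq ▸ hvsupp
  suffices ∀ i, cSeq S TS (u * v) i = cSeq S TS u i * cSeq S TS v i from this S.len
  intro i
  induction i with
  | zero => rfl
  | succ i ih =>
    simp only [cSeq, ih, conjBy_mul]
    exact List.prod_map_mul_of_commute fun t ht t' ht' =>
      commute_conjBy_conjBy (S.conj_mem i) (conjBy_cSeq S TS hu i)
        (cSeq_mem_supportedIn S TS hv i) (TS.mem i t ht) (TS.mem i t' ht')

theorem cSeq_mul {G : Type*} [Group G] [Fintype G] (g : G)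
    (S : SubnormalSeries G g) (TS : TransversalSystem S)
    (u v : MonoidAlgebra ℤ G) (hu : IsUnit u) (hv : IsUnit v)
    (husupp : (u.coeff.support : Set G) ⊆ (Subgroup.zpowers g : Subgroup G))
    (hvsupp : (v.coeff.support : Set G) ⊆ (Subgroup.zpowers g : Subgroup G)) :
    cSeq S TS (u * v) S.len = cSeq S TS u S.len * cSeq S TS v S.len :=
  cSeq_mul_general g S TS u v husupp hvsupp
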